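/- Let I = (𝔼, D, c, f) be a CMP instance whose objective f is of type sum, product, or bottleneck, and let e ∈ 𝔼 be an element that lies outside at least one optimal solution of I. Then l'(I,e) = sup{α : 0 ≤ α < maxdec(e) and every optimal solution of I is optimal for I_{−α,e}}, i.e., the new single lower tolerance coincides with the current single lower tolerance of e. -/

import Mathlib

/-! Decreasing `c e` (below `c e` itself for products, so that costs stay nonnegative) can only
lower the cost of each solution; hence when the optimal value is unchanged, every old optimum, now
costing at most that value, is still optimal. Conversely, an optimum avoiding `e` keeps its cost,
so when it stays optimal the optimal value is unchanged. -/

open scoped ENNReal BigOperators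

/-- Objective type of a combinatorial minimization problem:
sum, product, or bottleneck. -/
inductive ObjType where
  | sum : ObjType
  | prod : ObjType
  | bottleneck : ObjType
deriving DecidableEq

/-- The cost `f_c(S)` of a feasible solution `S` under cost function `c`:
the sum, the product, or the maximum (for nonempty `S`) of the element costs. -/
noncomputable def objCost {ι : Type*} (t : ObjType) (c : ι → ℝ) (S : Finset ι) : ℝ :=
  match t with
  | ObjType.sum => ∑ e ∈ S, c e
  | ObjType.prod => ∏ e ∈ S, c e
  | ObjType.bottleneck => if h : S.Nonempty then S.sup' h c else 0

/-- The optimal objective value `f(I)` of the instance with feasible set `D`. -/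
noncomputable def optVal {ι : Type*} (t : ObjType) (c : ι → ℝ) (D : Finset (Finset ι)) : ℝ :=
  if h : D.Nonempty then D.inf' h (objCost t c) else 0

/-- `S` is an optimal solution of the instance `(𝔼, D, c, f)`. -/
def isOpt {ι : Type*} (t : ObjType) (c : ι → ℝ) (D : Finset (Finset ι)) (S : Finset ι) : Prop :=
  S ∈ D ∧ objCost t c S = optVal t c D

/-- `0 ≤ a < maxdec(e)`, where `maxdec(e) = ∞` for sum/bottleneck objectives and
`maxdec(e) = c(e)` for the product objective. -/
def decOK {ι : Type*} (t : ObjType) (c : ι → ℝ) (e : ι) (a : ℝ) : Prop :=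
  0 ≤ a ∧ (t = ObjType.prod → a < c e)

/-- Extended single upper tolerance
`u'(I,e) = sup {α ≥ 0 : every optimal solution of I is optimal for I_{α,e}}` valued in `[0,∞]`. -/
noncomputable def uTol {ι : Type*} [DecidableEq ι] (t : ObjType) (c : ι → ℝ)
    (D : Finset (Finset ι)) (e : ι) : ℝ≥0∞ :=
  sSup (ENNReal.ofReal '' {a : ℝ | 0 ≤ a ∧
    ∀ S : Finset ι, isOpt t c D S →
      isOpt t (fun x => if x = e then c x + a else c x) D S})

/-- Extended regular set upper tolerance `u'(I,E)`, valued in `[0,∞]`. -/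
noncomputable def uTolSet {ι : Type*} [DecidableEq ι] (t : ObjType) (c : ι → ℝ)
    (D : Finset (Finset ι)) (E : Finset ι) : ℝ≥0∞ :=
  sSup (ENNReal.ofReal '' {a : ℝ |
    ∀ S : Finset ι, isOpt t c D S →
      ∃ α : ι → ℝ, (∀ x, 0 ≤ α x) ∧ (∀ x ∉ E, α x = 0) ∧
        a = ∑ x ∈ E, α x ∧ isOpt t (fun x => c x + α x) D S})

/-- Extended reverse set upper tolerance `u_b'(I,E)`, valued in `[0,∞]` (`inf ∅ = ∞`). -/
noncomputable def uTolSetRev {ι : Type*} [DecidableEq ι] (t : ObjType) (c : ι → ℝ)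
    (D : Finset (Finset ι)) (E : Finset ι) : ℝ≥0∞ :=
  sInf (ENNReal.ofReal '' {a : ℝ |
    ∃ S : Finset ι, isOpt t c D S ∧
      ∃ α : ι → ℝ, (∀ x, 0 ≤ α x) ∧ (∀ x ∉ E, α x = 0) ∧
        a = ∑ x ∈ E, α x ∧ ¬ isOpt t (fun x => c x + α x) D S})

/-- New single lower tolerance
`l'(I,e) = sup {α : 0 ≤ α < maxdec(e), f(I_{−α,e}) = f(I)}`, valued in `[0,∞]`. -/
noncomputable def lTol {ι : Type*} [DecidableEq ι] (t : ObjType) (c : ι → ℝ)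
    (D : Finset (Finset ι)) (e : ι) : ℝ≥0∞ :=
  sSup (ENNReal.ofReal '' {a : ℝ | decOK t c e a ∧
    optVal t (fun x => if x = e then c x - a else c x) D = optVal t c D})

/-- New regular set lower tolerance `l'(I,E)`, valued in `[0,∞]`. -/
noncomputable def lTolSet {ι : Type*} [DecidableEq ι] (t : ObjType) (c : ι → ℝ)
    (D : Finset (Finset ι)) (E : Finset ι) : ℝ≥0∞ :=
  sSup (ENNReal.ofReal '' {a : ℝ |
    ∃ α : ι → ℝ, (∀ x ∈ E, decOK t c x (α x)) ∧ (∀ x ∉ E, α x = 0) ∧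
      a = ∑ x ∈ E, α x ∧ optVal t (fun x => c x - α x) D = optVal t c D})

/-- New reverse set lower tolerance `l_b'(I,E)`, valued in `[0,∞]` (`inf ∅ = ∞`). -/
noncomputable def lTolSetRev {ι : Type*} [DecidableEq ι] (t : ObjType) (c : ι → ℝ)
    (D : Finset (Finset ι)) (E : Finset ι) : ℝ≥0∞ :=
  sInf (ENNReal.ofReal '' {a : ℝ |
    ∃ α : ι → ℝ, (∀ x ∈ E, decOK t c x (α x)) ∧ (∀ x ∉ E, α x = 0) ∧
      a = ∑ x ∈ E, α x ∧ optVal t (fun x => c x - α x) D < optVal t c D})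

section
variable {ι : Type*} (t : ObjType) {c c' : ι → ℝ}

theorem objCost_congr {S : Finset ι} (h : ∀ x ∈ S, c' x = c x) :
    objCost t c' S = objCost t c S := by
  cases t with
  | sum => exact Finset.sum_congr rfl h
  | prod => exact Finset.prod_congr rfl h
  | bottleneck =>
    simp only [objCost]
    split_ifs with hS
    · exact Finset.sup'_congr hS rfl h
    · rfl

theorem objCost_mono {S : Finset ι} (h : ∀ x ∈ S, c' x ≤ c x)
    (hp : t = ObjType.prod → ∀ x ∈ S, 0 ≤ c' x) :
    objCost t c' S ≤ objCost t c S := by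
  cases t with
  | sum => exact Finset.sum_le_sum h
  | prod => exact Finset.prod_le_prod (hp rfl) h
  | bottleneck =>
    simp only [objCost]
    split_ifs with hS
    · exact Finset.sup'_le _ _ fun x hx => (h x hx).trans (Finset.le_sup' c hx)
    · rfl

theorem optVal_le_objCost {D : Finset (Finset ι)} {S : Finset ι} (hS : S ∈ D) :
    optVal t c D ≤ objCost t c S := by
  rw [optVal, dif_pos ⟨S, hS⟩]
  exact Finset.inf'_le _ hS

theorem isOpt_of_le_of_optVal_eq {D : Finset (Finset ι)} {S : Finset ι}
    (hle : ∀ x, c' x ≤ c x) (hp : t = ObjType.prod → ∀ x, 0 ≤ c' x)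
    (hval : optVal t c' D = optVal t c D) (hS : isOpt t c D S) : isOpt t c' D S := by
  refine ⟨hS.1, le_antisymm ?_ (optVal_le_objCost t hS.1)⟩
  calc objCost t c' S ≤ objCost t c S :=
        objCost_mono t (fun x _ => hle x) fun ht x _ => hp ht x
    _ = optVal t c' D := hS.2.trans hval.symm

theorem optVal_eq_of_isOpt_of_eqOn {D : Finset (Finset ι)} {S : Finset ι}
    (hS : isOpt t c D S) (hS' : isOpt t c' D S) (h : ∀ x ∈ S, c' x = c x) :
    optVal t c' D = optVal t c D :=
  hS'.2.symm.trans ((objCost_congr t h).trans hS.2)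

end

theorem lsi_consistent_general {ι : Type*} [DecidableEq ι]
    (t : ObjType) (c : ι → ℝ) (D : Finset (Finset ι))
    (hpos : t = ObjType.prod → ∀ x, 0 < c x)
    (e : ι) (he : ∃ S : Finset ι, isOpt t c D S ∧ e ∉ S) :
    lTol t c D e =
      sSup (ENNReal.ofReal '' {a : ℝ | decOK t c e a ∧
        ∀ S : Finset ι, isOpt t c D S →
          isOpt t (fun x => if x = e then c x - a else c x) D S}) := by
  obtain ⟨S₀, hS₀, heS₀⟩ := he
  unfold lTol
  congr 2
  ext a
  refine and_congr_right fun ha => ⟨fun hval S hS => ?_, fun hall => ?_⟩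
  · refine isOpt_of_le_of_optVal_eq t (fun x => ?_) (fun ht x => ?_) hval hS
    · split_ifs <;> linarith [ha.1]
    · split_ifs with hx
      · subst hx; linarith [ha.2 ht]
      · exact (hpos ht x).le
  · exact optVal_eq_of_isOpt_of_eqOn t hS₀ (hall S₀ hS₀)
      fun x hx => if_neg (ne_of_mem_of_not_mem hx heS₀)

/-- Theorem 4(a) (consistency): if `e` lies outside at least one optimal
solution, then the new single lower tolerance `l'(I,e)` coincides with the
current single lower tolerance
`sup {α : 0 ≤ α < maxdec(e), every optimal solution of I is optimal for I_{−α,e}}`. -/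
theorem lsi_consistent {ι : Type*} [Fintype ι] [DecidableEq ι]
    (t : ObjType) (c : ι → ℝ) (D : Finset (Finset ι))
    (hD : D.Nonempty) (hSne : ∀ S ∈ D, S.Nonempty)
    (hpos : t = ObjType.prod → ∀ x, 0 < c x)
    (e : ι) (he : ∃ S : Finset ι, isOpt t c D S ∧ e ∉ S) :
    lTol t c D e =
      sSup (ENNReal.ofReal '' {a : ℝ | decOK t c e a ∧
        ∀ S : Finset ι, isOpt t c D S →
          isOpt t (fun x => if x = e then c x - a else c x) D S}) :=
  lsi_consistent_general t c D hpos e he
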